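/- Let q be a quaternion and s = u + v*I where u, v are real, v > 0, and I is a purely imaginary unit quaternion. If |q - u| < v, then the series ∑_{n≥0} (q - u)ⁿ * (v*I)^{-n-1} converges and its sum equals -(q² - 2*u*q + u² + v²)⁻¹ * (q - u + v*I). -/

import Mathlib

open Quaternion

/-!
Write `a = q - u`, `b = v I` and `S` for the sum. Shifting the index gives `S = b⁻¹ + a S b⁻¹`,
i.e. `S b = 1 + a S`. Multiplying once more by `b` on the right and using that `b² = -v²` is real,
hence central, yields `(b² - a²) S = a + b`; and `b² - a² = -(q² - 2uq + u² + v²)`, which is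
nonzero because `‖a²‖ < v² = ‖b²‖`.
-/

theorem HasSum.mul_eq_one_add_mul {R : Type*} [DivisionRing R] [TopologicalSpace R]
    [IsTopologicalRing R] [T2Space R] {a b S : R} (hb : b ≠ 0)
    (h : HasSum (fun n : ℕ => a ^ n * b⁻¹ ^ (n + 1)) S) :
    S * b = 1 + a * S := by
  have hterm (n : ℕ) : a ^ (n + 1) * b⁻¹ ^ (n + 1 + 1) = a * (a ^ n * b⁻¹ ^ (n + 1)) * b⁻¹ := by
    rw [pow_succ' a, pow_succ b⁻¹, mul_assoc, mul_assoc, mul_assoc]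
  have hshift := (hasSum_nat_add_iff' 1).mpr h
  simp only [Finset.sum_range_one, pow_zero, Nat.reduceAdd, one_mul, pow_one, hterm] at hshift
  have hS : S = b⁻¹ + a * S * b⁻¹ :=
    sub_eq_iff_eq_add'.mp (hshift.unique ((h.mul_left a).mul_right b⁻¹))
  conv_lhs => rw [hS]
  rw [add_mul, mul_assoc, inv_mul_cancel₀ hb, mul_one]

theorem sq_sub_sq_mul_eq_of_mul_eq_one_add_mul {R : Type*} [Ring R] {a b S : R}
    (hS : S * b = 1 + a * S) (hcomm : Commute S (b ^ 2)) :
    (b ^ 2 - a ^ 2) * S = a + b := by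
  have : S * b ^ 2 = b + a + a ^ 2 * S := by
    rw [sq, ← mul_assoc, hS, add_mul, mul_assoc, hS]; noncomm_ring
  rw [sub_mul, ← hcomm.eq, this]; abel

theorem summable_pow_mul_inv_pow_succ {R : Type*} [NormedDivisionRing R] [CompleteSpace R]
    {a b : R} (h : ‖a‖ < ‖b‖) : Summable fun n : ℕ => a ^ n * b⁻¹ ^ (n + 1) := by
  have hb : 0 < ‖b‖ := (norm_nonneg a).trans_lt h
  refine Summable.of_norm ?_
  have hr : ‖a‖ / ‖b‖ < 1 := (div_lt_one hb).mpr h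
  refine ((summable_geometric_of_lt_one (by positivity) hr).mul_left ‖b‖⁻¹).congr fun n => ?_
  rw [norm_mul, norm_pow, norm_pow, norm_inv, div_eq_mul_inv, mul_pow, inv_pow, inv_pow, pow_succ]
  ring

theorem norm_eq_one_of_sq_eq_neg_one {R : Type*} [NormedDivisionRing R] {x : R}
    (hx : x ^ 2 = -1) : ‖x‖ = 1 := by
  have : ‖x‖ ^ 2 = 1 := by rw [← norm_pow, hx, norm_neg, norm_one]
  nlinarith [norm_nonneg x]

namespace Quaternion

theorem coe_mul_sq_of_sq_eq_neg_one {I : ℍ[ℝ]} (hI : I ^ 2 = -1) (v : ℝ) :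
    ((v : ℍ[ℝ]) * I) ^ 2 = -((v ^ 2 : ℝ) : ℍ[ℝ]) := by
  rw [(coe_commute v I).mul_pow, hI, mul_neg_one, coe_pow]

end Quaternion

theorem stmt_8 (q : ℍ[ℝ]) (u v : ℝ) (hv : 0 < v) (I : ℍ[ℝ]) (hI : I ^ 2 = -1)
    (h : ‖q - (u : ℍ[ℝ])‖ < v) :
    Summable (fun n : ℕ => (q - (u : ℍ[ℝ])) ^ n * (((v : ℍ[ℝ]) * I)⁻¹) ^ (n + 1)) ∧
    ∑' n : ℕ, (q - (u : ℍ[ℝ])) ^ n * (((v : ℍ[ℝ]) * I)⁻¹) ^ (n + 1) =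
      -(q ^ 2 - 2 * (u : ℍ[ℝ]) * q + ((u ^ 2 + v ^ 2 : ℝ) : ℍ[ℝ]))⁻¹ *
        (q - (u : ℍ[ℝ]) + (v : ℍ[ℝ]) * I) := by
  set a : ℍ[ℝ] := q - (u : ℍ[ℝ])
  set b : ℍ[ℝ] := (v : ℍ[ℝ]) * I
  have hb : ‖b‖ = v := by
    rw [norm_mul, norm_eq_one_of_sq_eq_neg_one hI, mul_one, norm_coe, Real.norm_of_nonneg hv.le]
  have hsum := summable_pow_mul_inv_pow_succ (a := a) (b := b) (hb ▸ h)
  refine ⟨hsum, ?_⟩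
  have hb2 : b ^ 2 = -((v ^ 2 : ℝ) : ℍ[ℝ]) := coe_mul_sq_of_sq_eq_neg_one hI v
  have hrel := sq_sub_sq_mul_eq_of_mul_eq_one_add_mul
    (hsum.hasSum.mul_eq_one_add_mul (norm_pos_iff.mp (hb ▸ hv)))
    (hb2 ▸ (coe_commute (v ^ 2) _).neg_left.symm)
  have hD : q ^ 2 - 2 * (u : ℍ[ℝ]) * q + ((u ^ 2 + v ^ 2 : ℝ) : ℍ[ℝ]) = -(b ^ 2 - a ^ 2) := by
    have hcu : (u : ℍ[ℝ]) * q = q * u := coe_commutes u q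
    rw [hb2]; push_cast; simp only [a, sq, sub_mul, mul_sub, two_mul, add_mul, hcu]; abel
  have hne : b ^ 2 - a ^ 2 ≠ 0 := by
    rw [sub_ne_zero]
    refine ne_of_apply_ne norm (ne_of_gt ?_)
    rw [norm_pow, norm_pow, hb]
    exact pow_lt_pow_left₀ h (norm_nonneg _) two_ne_zero
  rw [hD, inv_neg, neg_neg, eq_inv_mul_iff_mul_eq₀ hne, hrel]
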